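/- Let |GHZ⟩ = (|000⟩ + |111⟩)/√2 ∈ ℂ²⊗ℂ²⊗ℂ², and let the parties' observables be the 2×2 Hermitian matrices A₁ = B₁ = σ_z, A₂ = B₂ = σ_x, C₁ = (σ_z − σ_x)/√2, C₂ = (σ_z + σ_x)/√2. Define the quantum correlators ⟨A_xB_yC_z⟩ := ⟨GHZ| A_x ⊗ B_y ⊗ C_z |GHZ⟩, ⟨A_xB_y⟩ := ⟨GHZ| A_x ⊗ B_y ⊗ I |GHZ⟩, ⟨B_yC_z⟩ := ⟨GHZ| I ⊗ B_y ⊗ C_z |GHZ⟩, and ⟨A_xC_z⟩_y := ⟨GHZ| A_x ⊗ I ⊗ C_z |GHZ⟩ (independent of y). Then 2⟨A₁B₁⟩ + ⟨A₁C₁⟩_{y=1} + ⟨A₁C₁⟩_{y=2} + 2⟨B₁C₂⟩ − 2⟨A₂B₂C₁⟩ + 2⟨A₂B₂C₂⟩ = 2(1 + 2√2), which exceeds the RCBL bound 6. -/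

import Mathlib

open Matrix Kronecker

/-- Pauli `σ_z`. -/
noncomputable def sigmaZ : Matrix (Fin 2) (Fin 2) ℂ := !![1, 0; 0, -1]

/-- Pauli `σ_x`. -/
noncomputable def sigmaX : Matrix (Fin 2) (Fin 2) ℂ := !![0, 1; 1, 0]

/-- Charlie's observable `C₁ = (σ_z − σ_x)/√2`. -/
noncomputable def obsC1 : Matrix (Fin 2) (Fin 2) ℂ :=
  ((Real.sqrt 2 : ℂ))⁻¹ • (sigmaZ - sigmaX)

/-- Charlie's observable `C₂ = (σ_z + σ_x)/√2`. -/
noncomputable def obsC2 : Matrix (Fin 2) (Fin 2) ℂ :=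
  ((Real.sqrt 2 : ℂ))⁻¹ • (sigmaZ + sigmaX)

/-- The three-qubit GHZ state `(|000⟩ + |111⟩)/√2`. -/
noncomputable def ghz3 : (Fin 2 × Fin 2) × Fin 2 → ℂ :=
  fun p => if p = ((0, 0), 0) ∨ p = ((1, 1), 1) then ((Real.sqrt 2 : ℂ))⁻¹ else 0

/-- The expectation value `⟨GHZ| M |GHZ⟩`. -/
noncomputable def ghzExp
    (M : Matrix ((Fin 2 × Fin 2) × Fin 2) ((Fin 2 × Fin 2) × Fin 2) ℂ) : ℂ :=
  star ghz3 ⬝ᵥ (M *ᵥ ghz3)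

/-! Since |GHZ⟩ is supported on |000⟩ and |111⟩ with equal amplitudes, a product observable
`A ⊗ B ⊗ C` has expectation `½ ∑ᵢⱼ Aᵢⱼ Bᵢⱼ Cᵢⱼ`. The correlators in `I_RCBL` are then `1` and
`±1/√2`, and `I_RCBL = 2 + 8/√2 = 2 + 4√2`. -/

lemma ghzExp_kronecker (A B C : Matrix (Fin 2) (Fin 2) ℂ) :
    ghzExp ((A ⊗ₖ B) ⊗ₖ C) = 2⁻¹ * (A 0 0 * B 0 0 * C 0 0 + A 0 1 * B 0 1 * C 0 1
      + A 1 0 * B 1 0 * C 1 0 + A 1 1 * B 1 1 * C 1 1) := by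
  have hnorm : ((Real.sqrt 2 : ℂ))⁻¹ ^ 2 = 2⁻¹ := by
    rw [inv_pow, ← Complex.ofReal_pow, Real.sq_sqrt zero_le_two, Complex.ofReal_ofNat]
  simp only [ghzExp, ghz3, dotProduct, mulVec, Pi.star_apply, Fintype.sum_prod_type,
    Fin.sum_univ_two, kroneckerMap_apply]
  simp only [Fin.isValue, Prod.mk.injEq, zero_ne_one, one_ne_zero, and_self, and_false, and_true,
    or_false, or_true, or_self, ↓reduceIte, star_inv₀, RCLike.star_def, Complex.conj_ofReal,
    star_zero, mul_zero, zero_mul, add_zero, zero_add]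
  linear_combination (A 0 0 * B 0 0 * C 0 0 + A 0 1 * B 0 1 * C 0 1
      + A 1 0 * B 1 0 * C 1 0 + A 1 1 * B 1 1 * C 1 1) * hnorm

lemma ghzExp_sigmaZ_sigmaZ_one :
    ghzExp ((sigmaZ ⊗ₖ sigmaZ) ⊗ₖ (1 : Matrix (Fin 2) (Fin 2) ℂ)) = 1 := by
  rw [ghzExp_kronecker]
  norm_num [sigmaZ]

lemma ghzExp_sigmaZ_one_obsC1 :
    ghzExp ((sigmaZ ⊗ₖ (1 : Matrix (Fin 2) (Fin 2) ℂ)) ⊗ₖ obsC1) = (Real.sqrt 2 : ℂ)⁻¹ := by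
  rw [ghzExp_kronecker]
  norm_num [sigmaZ, sigmaX, obsC1]
  ring

lemma ghzExp_one_sigmaZ_obsC2 :
    ghzExp (((1 : Matrix (Fin 2) (Fin 2) ℂ) ⊗ₖ sigmaZ) ⊗ₖ obsC2) = (Real.sqrt 2 : ℂ)⁻¹ := by
  rw [ghzExp_kronecker]
  norm_num [sigmaZ, sigmaX, obsC2]
  ring

lemma ghzExp_sigmaX_sigmaX_obsC1 :
    ghzExp ((sigmaX ⊗ₖ sigmaX) ⊗ₖ obsC1) = -(Real.sqrt 2 : ℂ)⁻¹ := by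
  rw [ghzExp_kronecker]
  norm_num [sigmaZ, sigmaX, obsC1]
  ring

lemma ghzExp_sigmaX_sigmaX_obsC2 :
    ghzExp ((sigmaX ⊗ₖ sigmaX) ⊗ₖ obsC2) = (Real.sqrt 2 : ℂ)⁻¹ := by
  rw [ghzExp_kronecker]
  norm_num [sigmaZ, sigmaX, obsC2]
  ring

theorem ghz_violates_rcbl_inequality :
    2 * ghzExp ((sigmaZ ⊗ₖ sigmaZ) ⊗ₖ (1 : Matrix (Fin 2) (Fin 2) ℂ))
      + ghzExp ((sigmaZ ⊗ₖ (1 : Matrix (Fin 2) (Fin 2) ℂ)) ⊗ₖ obsC1)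
      + ghzExp ((sigmaZ ⊗ₖ (1 : Matrix (Fin 2) (Fin 2) ℂ)) ⊗ₖ obsC1)
      + 2 * ghzExp (((1 : Matrix (Fin 2) (Fin 2) ℂ) ⊗ₖ sigmaZ) ⊗ₖ obsC2)
      - 2 * ghzExp ((sigmaX ⊗ₖ sigmaX) ⊗ₖ obsC1)
      + 2 * ghzExp ((sigmaX ⊗ₖ sigmaX) ⊗ₖ obsC2)
      = ((2 * (1 + 2 * Real.sqrt 2) : ℝ) : ℂ) ∧
    (6 : ℝ) < 2 * (1 + 2 * Real.sqrt 2) := by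
  have two_div_sqrt_two : 2 * (Real.sqrt 2 : ℂ)⁻¹ = Real.sqrt 2 := by
    rw [← div_eq_mul_inv]
    exact_mod_cast Real.div_sqrt
  refine ⟨?_, by linarith [Real.one_lt_sqrt_two]⟩
  rw [ghzExp_sigmaZ_sigmaZ_one, ghzExp_sigmaZ_one_obsC1, ghzExp_one_sigmaZ_obsC2,
    ghzExp_sigmaX_sigmaX_obsC1, ghzExp_sigmaX_sigmaX_obsC2]
  push_cast
  linear_combination 4 * two_div_sqrt_two
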